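/- With Gauss–Southwell block selection, after t epochs (each epoch consisting of m updates, where m = |P|), the iterates of alternating projection satisfy ‖W⁽ᵗ⁾ − W*‖_K² ≤ exp(−t/κ′) ‖W⁽⁰⁾ − W*‖_K², where κ′ = λ'_max/λ_min, λ'_max = max_{I ∈ P} λ_max(K_{I,I}), λ_min is the smallest eigenvalue of K, and ‖M‖_K² = tr(Mᵀ K M). -/

import Mathlib

/-!
A block update minimises the energy `‖W - W*‖_K²` exactly over the rows in `I`, so with error
`E = W - W*`, residual `R = B - K W = -K E` and `S = rowSel I` it lowers the energy by exactly
`tr ((S R)ᵀ K_II⁻¹ (S R)) ≥ ‖R_I‖_F² / λ'_max`. The Gauss–Southwell rule gives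
`‖R_I‖_F² ≥ ‖R‖_F² / m`, and `‖R‖_F² = tr (Eᵀ K² E) ≥ λ_min ‖E‖_K²`. Each step therefore contracts
the energy by `1 - λ_min / (m λ'_max) ≤ exp (-λ_min / (m λ'_max))`, and an epoch of `m` steps by
`exp (-λ_min / λ'_max)`.
-/

open Matrix

/-- The row-selection matrix `E_I`: rows of the identity indexed by `I`. -/
def rowSel {n : ℕ} (I : Finset (Fin n)) : Matrix I (Fin n) ℝ :=
  Matrix.of fun i j => if (i : Fin n) = j then 1 else 0

open scoped MatrixOrder

theorem le_exp_neg_mul_of_forall_le_one_sub_mul {a : ℕ → ℝ} {x : ℝ} (ha : ∀ j, 0 ≤ a j)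
    (h : ∀ j, a (j + 1) ≤ (1 - x) * a j) (s : ℕ) : a s ≤ Real.exp (-(x * s)) * a 0 := by
  induction s with
  | zero => simp
  | succ s ih =>
    calc a (s + 1) ≤ (1 - x) * a s := h s
      _ ≤ Real.exp (-x) * a s := by
        gcongr
        · exact ha s
        · linarith [Real.add_one_le_exp (-x)]
      _ ≤ Real.exp (-x) * (Real.exp (-(x * s)) * a 0) := by gcongr
      _ = Real.exp (-(x * ↑(s + 1))) * a 0 := by
        rw [← mul_assoc, ← Real.exp_add]; push_cast; ring_nf

theorem Finset.sum_le_card_mul_of_forall_sum_le {α : Type*} [Fintype α] [DecidableEq α]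
    {P : Finset (Finset α)} (hcover : ∀ a, ∃ I ∈ P, a ∈ I)
    (hdisj : ∀ I ∈ P, ∀ J ∈ P, I ≠ J → Disjoint I J) {g : α → ℝ} {I : Finset α}
    (hI : ∀ J ∈ P, ∑ a ∈ J, g a ≤ ∑ a ∈ I, g a) :
    ∑ a, g a ≤ P.card * ∑ a ∈ I, g a := by
  have huniv : (Finset.univ : Finset α) = P.biUnion id := by
    ext a; simpa using hcover a
  rw [huniv, Finset.sum_biUnion (t := id) fun I hI J hJ hIJ => hdisj I hI J hJ hIJ,
    ← nsmul_eq_mul]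
  exact Finset.sum_le_card_nsmul P _ _ hI

namespace Matrix

variable {ι κ ν : Type*} [Fintype ι] [Fintype κ]

theorem IsHermitian.cfc_le_cfc_of_eigenvalues [DecidableEq ι] {A : Matrix ι ι ℝ}
    (hA : A.IsHermitian) {f g : ℝ → ℝ}
    (h : ∀ i, f (hA.eigenvalues i) ≤ g (hA.eigenvalues i)) : cfc f A ≤ cfc g A :=
  cfc_mono (fun x hx => by
      obtain ⟨i, rfl⟩ := hA.spectrum_real_eq_range_eigenvalues ▸ hx
      exact h i)
    (A.finite_real_spectrum.continuousOn _) (A.finite_real_spectrum.continuousOn _)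

theorem PosSemidef.smul_le_mul_self [DecidableEq ι] {A : Matrix ι ι ℝ} (hA : A.PosSemidef)
    {c : ℝ} (hc : ∀ i, c ≤ hA.1.eigenvalues i) : c • A ≤ A * A := by
  have : IsSelfAdjoint A := hA.1
  rw [← cfc_const_mul_id c A, ← sq, ← cfc_pow_id (R := ℝ) A 2]
  exact hA.1.cfc_le_cfc_of_eigenvalues fun i => by nlinarith [hc i, hA.eigenvalues_nonneg i]

theorem PosDef.one_le_smul_inv [DecidableEq ι] {A : Matrix ι ι ℝ} (hA : A.PosDef) {c : ℝ}
    (hc : ∀ i, hA.1.eigenvalues i ≤ c) : 1 ≤ c • A⁻¹ := by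
  have : IsSelfAdjoint A := hA.1
  have hinv : cfc (·⁻¹ : ℝ → ℝ) A = A⁻¹ := by
    simpa [coe_units_inv] using cfc_inv_id (R := ℝ) hA.isUnit.unit
  rw [← cfc_one ℝ A, ← hinv, ← cfc_const_mul c _ A (A.finite_real_spectrum.continuousOn _)]
  refine hA.1.cfc_le_cfc_of_eigenvalues fun i => ?_
  rw [Pi.one_apply, ← div_eq_mul_inv, one_le_div (hA.eigenvalues_pos i)]
  exact hc i

theorem trace_transpose_mul_mul_le_of_le {M N : Matrix ι ι ℝ} (h : M ≤ N) (X : Matrix ι κ ℝ) :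
    (Xᵀ * M * X).trace ≤ (Xᵀ * N * X).trace := by
  have := (le_iff.mp h).conjTranspose_mul_mul_same X
  rw [conjTranspose_eq_transpose_of_trivial, Matrix.mul_sub, Matrix.sub_mul] at this
  simpa [trace_sub, sub_nonneg] using this.trace_nonneg

theorem trace_transpose_mul_self (M : Matrix ι κ ℝ) :
    (Mᵀ * M).trace = ∑ i, ∑ j, M i j ^ 2 := by
  simp only [trace, diag_apply, mul_apply, transpose_apply, sq]
  exact Finset.sum_comm

theorem transpose_mul_mul_add_correction [DecidableEq κ]
    (K : Matrix ι ι ℝ) (hK : Kᵀ = K) (S : Matrix κ ι ℝ) (hA : IsUnit (S * K * Sᵀ).det)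
    (E R : Matrix ι ν ℝ) (hR : K * E = -R) :
    (E + Sᵀ * (S * K * Sᵀ)⁻¹ * (S * R))ᵀ * K * (E + Sᵀ * (S * K * Sᵀ)⁻¹ * (S * R))
      = Eᵀ * K * E - (S * R)ᵀ * (S * K * Sᵀ)⁻¹ * (S * R) := by
  set A := S * K * Sᵀ
  set Z := A⁻¹ * (S * R) with hZ
  have hAZ : A * Z = S * R := by rw [hZ, ← Matrix.mul_assoc, mul_nonsing_inv A hA, Matrix.one_mul]
  clear_value Z
  have hAT : Aᵀ = A := by simp [A, hK, Matrix.mul_assoc]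
  have hsymm : Zᵀ * (S * R) = (S * R)ᵀ * Z := by
    rw [← hAZ, transpose_mul, hAT, Matrix.mul_assoc Zᵀ]
  have hEK : Eᵀ * K = -Rᵀ := by rw [← hK, ← transpose_mul, hR, transpose_neg]
  have h₁ : Eᵀ * K * Sᵀ * Z = -((S * R)ᵀ * Z) := by
    rw [hEK, transpose_mul]; simp [Matrix.mul_assoc]
  have h₂ : Zᵀ * (S * (K * E)) = -((S * R)ᵀ * Z) := by
    rw [hR, Matrix.mul_neg, Matrix.mul_neg, hsymm]
  calc (E + Sᵀ * A⁻¹ * (S * R))ᵀ * K * (E + Sᵀ * A⁻¹ * (S * R))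
      = Eᵀ * K * E + Eᵀ * K * Sᵀ * Z + Zᵀ * (S * (K * E)) + Zᵀ * (A * Z) := by
        simp only [A, hZ, transpose_add, transpose_mul, transpose_transpose, Matrix.add_mul,
          Matrix.mul_add, Matrix.mul_assoc]
        abel
    _ = Eᵀ * K * E - (S * R)ᵀ * A⁻¹ * (S * R) := by
        rw [h₁, h₂, hAZ, hsymm, hZ, Matrix.mul_assoc (S * R)ᵀ]
        abel

end Matrix

section rowSel

variable {n : ℕ} (I : Finset (Fin n))

theorem rowSel_mul_apply {κ : Type*} [Fintype κ] (M : Matrix (Fin n) κ ℝ) (i : I) (c : κ) :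
    (rowSel I * M) i c = M i c := by
  simp [rowSel, mul_apply, ite_mul, Finset.sum_ite_eq]

theorem rowSel_mul_transpose : rowSel I * (rowSel I)ᵀ = 1 := by
  ext i j
  rw [rowSel_mul_apply, transpose_apply, rowSel, of_apply, one_apply]
  exact if_congr (Subtype.ext_iff.symm.trans eq_comm) rfl rfl

theorem sum_sq_rowSel_mul {κ : Type*} [Fintype κ] (M : Matrix (Fin n) κ ℝ) :
    ∑ i, ∑ c, (rowSel I * M) i c ^ 2 = ∑ i ∈ I, ∑ c, M i c ^ 2 := by
  simp only [rowSel_mul_apply]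
  exact Finset.sum_coe_sort I fun i => ∑ c, M i c ^ 2

theorem Matrix.PosDef.rowSel_mul_mul_transpose {K : Matrix (Fin n) (Fin n) ℝ} (hK : K.PosDef) :
    (rowSel I * K * (rowSel I)ᵀ).PosDef := by
  rw [← conjTranspose_eq_transpose_of_trivial]
  refine hK.mul_mul_conjTranspose_same fun x y hxy => ?_
  simpa [vecMul_vecMul, conjTranspose_eq_transpose_of_trivial, rowSel_mul_transpose] using
    congrArg (· ᵥ* (rowSel I)ᵀ) hxy

end rowSel

theorem gaussSouthwell_step_contraction {n l : ℕ} {K : Matrix (Fin n) (Fin n) ℝ} (hK : K.PosDef)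
    {P : Finset (Finset (Fin n))} (hcover : ∀ i, ∃ I ∈ P, i ∈ I)
    (hdisj : ∀ I ∈ P, ∀ J ∈ P, I ≠ J → Disjoint I J)
    {lammin lam'max : ℝ} (hmin : ∀ i, lammin ≤ hK.1.eigenvalues i) (hmax₀ : 0 < lam'max)
    {I : Finset (Fin n)} (hI : I ∈ P)
    (hmax : ∀ i, (hK.rowSel_mul_mul_transpose I).1.eigenvalues i ≤ lam'max)
    {B Wstar : Matrix (Fin n) (Fin l) ℝ} (hWstar : K * Wstar = B) (W : Matrix (Fin n) (Fin l) ℝ)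
    (hGS : ∀ J ∈ P, ∑ i ∈ J, ∑ c, (B - K * W) i c ^ 2 ≤ ∑ i ∈ I, ∑ c, (B - K * W) i c ^ 2) :
    letI W' := W + (rowSel I)ᵀ * (rowSel I * K * (rowSel I)ᵀ)⁻¹ * (rowSel I * (B - K * W))
    ((W' - Wstar)ᵀ * K * (W' - Wstar)).trace
      ≤ (1 - lammin / (P.card * lam'max)) * ((W - Wstar)ᵀ * K * (W - Wstar)).trace := by
  set S := rowSel I
  set R := B - K * W
  set E := W - Wstar
  have hApd : (S * K * Sᵀ).PosDef := hK.rowSel_mul_mul_transpose I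
  have hKT : Kᵀ = K := by simpa [conjTranspose_eq_transpose_of_trivial] using hK.1.eq
  have hE : K * E = -R := by simp [E, R, Matrix.mul_sub, hWstar]
  have hcard : (0 : ℝ) < P.card := by exact_mod_cast Finset.card_pos.mpr ⟨I, hI⟩
  have hW' : W + Sᵀ * (S * K * Sᵀ)⁻¹ * (S * R) - Wstar = E + Sᵀ * (S * K * Sᵀ)⁻¹ * (S * R) :=
    add_sub_right_comm ..
  rw [hW', transpose_mul_mul_add_correction K hKT S ((isUnit_iff_isUnit_det _).mp hApd.isUnit) E R
    hE, trace_sub]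
  have hres : lammin * (Eᵀ * K * E).trace ≤ ∑ i, ∑ c, R i c ^ 2 := by
    have hKK : Eᵀ * (K * K) * E = Rᵀ * R := by
      calc Eᵀ * (K * K) * E = (K * E)ᵀ * (K * E) := by
            rw [transpose_mul, hKT]; simp only [Matrix.mul_assoc]
        _ = Rᵀ * R := by rw [hE, transpose_neg, Matrix.neg_mul, Matrix.mul_neg, neg_neg]
    have := trace_transpose_mul_mul_le_of_le (hK.posSemidef.smul_le_mul_self hmin) E
    rwa [Matrix.mul_smul, Matrix.smul_mul, trace_smul, smul_eq_mul, hKK,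
      trace_transpose_mul_self] at this
  have hblock :
      ∑ i ∈ I, ∑ c, R i c ^ 2 ≤ lam'max * ((S * R)ᵀ * (S * K * Sᵀ)⁻¹ * (S * R)).trace := by
    have := trace_transpose_mul_mul_le_of_le (hApd.one_le_smul_inv hmax) (S * R)
    rwa [Matrix.mul_one, trace_transpose_mul_self, sum_sq_rowSel_mul, Matrix.mul_smul,
      Matrix.smul_mul, trace_smul, smul_eq_mul] at this
  have hpart := Finset.sum_le_card_mul_of_forall_sum_le hcover hdisj hGS
  have hdecrease : lammin / (P.card * lam'max) * (Eᵀ * K * E).trace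
      ≤ ((S * R)ᵀ * (S * K * Sᵀ)⁻¹ * (S * R)).trace := by
    rw [div_mul_eq_mul_div, div_le_iff₀ (by positivity)]
    nlinarith
  linarith

theorem altproj_gs_epoch_convergence_general {n l : ℕ}
    (K : Matrix (Fin n) (Fin n) ℝ) (hK : K.PosDef)
    (B : Matrix (Fin n) (Fin l) ℝ)
    (P : Finset (Finset (Fin n))) (m : ℕ) (hm : P.card = m)
    (hcover : ∀ i : Fin n, ∃ I ∈ P, i ∈ I)
    (hdisj : ∀ I ∈ P, ∀ J ∈ P, I ≠ J → Disjoint I J)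
    (lammin : ℝ) (hmin : IsLeast (Set.range hK.1.eigenvalues) lammin)
    (hsub : ∀ I : Finset (Fin n), (rowSel I * K * (rowSel I)ᵀ).IsHermitian)
    (lam'max : ℝ)
    (hlam : IsGreatest {x : ℝ | ∃ I ∈ P, ∃ i : I, x = (hsub I).eigenvalues i} lam'max)
    (Wstar : Matrix (Fin n) (Fin l) ℝ) (hWstar : Wstar = K⁻¹ * B)
    (W : ℕ → Matrix (Fin n) (Fin l) ℝ) (Idx : ℕ → Finset (Fin n))
    (hIdx : ∀ j, Idx j ∈ P)
    (hGS : ∀ j, ∀ J ∈ P, (∑ i ∈ J, ∑ c : Fin l, ((B - K * W j) i c) ^ 2)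
      ≤ ∑ i ∈ Idx j, ∑ c : Fin l, ((B - K * W j) i c) ^ 2)
    (hWupd : ∀ j, W (j + 1) = W j +
      (rowSel (Idx j))ᵀ * (rowSel (Idx j) * K * (rowSel (Idx j))ᵀ)⁻¹ *
        (rowSel (Idx j) * (B - K * W j))) :
    ∀ t : ℕ,
      ((W (t * m) - Wstar)ᵀ * K * (W (t * m) - Wstar)).trace
        ≤ Real.exp (-(t : ℝ) / (lam'max / lammin)) *
          ((W 0 - Wstar)ᵀ * K * (W 0 - Wstar)).trace := by
  intro t
  have hKWstar : K * Wstar = B := by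
    rw [hWstar, ← Matrix.mul_assoc, mul_nonsing_inv _ ((isUnit_iff_isUnit_det K).mp hK.isUnit),
      Matrix.one_mul]
  have hmin₀ : 0 < lammin := by
    obtain ⟨i, rfl⟩ := hmin.1
    exact hK.eigenvalues_pos i
  have hmax₀ : 0 < lam'max := by
    obtain ⟨I, -, i, rfl⟩ := hlam.1
    exact (hK.rowSel_mul_mul_transpose I).eigenvalues_pos i
  have hm₀ : (0 : ℝ) < m := by
    rw [← hm]; exact_mod_cast Finset.card_pos.mpr ⟨_, hIdx 0⟩
  have hstep (j : ℕ) : ((W (j + 1) - Wstar)ᵀ * K * (W (j + 1) - Wstar)).trace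
      ≤ (1 - lammin / (m * lam'max)) * ((W j - Wstar)ᵀ * K * (W j - Wstar)).trace := by
    rw [hWupd j, ← hm]
    exact gaussSouthwell_step_contraction hK hcover hdisj (fun i => hmin.2 ⟨i, rfl⟩) hmax₀
      (hIdx j) (fun i => hlam.2 ⟨_, hIdx j, i, rfl⟩) hKWstar (W j) (hGS j)
  have hnonneg (j : ℕ) : 0 ≤ ((W j - Wstar)ᵀ * K * (W j - Wstar)).trace := by
    simpa [conjTranspose_eq_transpose_of_trivial] using
      (hK.posSemidef.conjTranspose_mul_mul_same (W j - Wstar)).trace_nonneg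
  convert le_exp_neg_mul_of_forall_le_one_sub_mul hnonneg hstep (t * m) using 3
  push_cast
  field_simp

/-- With Gauss–Southwell block selection, after `t` epochs (each epoch being `m`
updates, `m = |P|`), alternating projection satisfies
`‖W⁽ᵗ⁾ − W*‖_K² ≤ exp(−t/κ′) ‖W⁽⁰⁾ − W*‖_K²` with `κ′ = λ'_max/λ_min`. -/
theorem altproj_gs_epoch_convergence {n l : ℕ}
    (K : Matrix (Fin n) (Fin n) ℝ) (hK : K.PosDef)
    (B : Matrix (Fin n) (Fin l) ℝ)
    (P : Finset (Finset (Fin n))) (m : ℕ) (hm : P.card = m)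
    (hcover : ∀ i : Fin n, ∃ I ∈ P, i ∈ I)
    (hdisj : ∀ I ∈ P, ∀ J ∈ P, I ≠ J → Disjoint I J)
    (hblockne : ∀ I ∈ P, I.Nonempty)
    (lammin : ℝ) (hmin : IsLeast (Set.range hK.1.eigenvalues) lammin)
    (hsub : ∀ I : Finset (Fin n), (rowSel I * K * (rowSel I)ᵀ).IsHermitian)
    (lam'max : ℝ)
    (hlam : IsGreatest {x : ℝ | ∃ I ∈ P, ∃ i : I, x = (hsub I).eigenvalues i} lam'max)
    (Wstar : Matrix (Fin n) (Fin l) ℝ) (hWstar : Wstar = K⁻¹ * B)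
    (W : ℕ → Matrix (Fin n) (Fin l) ℝ) (Idx : ℕ → Finset (Fin n))
    (hIdx : ∀ j, Idx j ∈ P)
    (hGS : ∀ j, ∀ J ∈ P, (∑ i ∈ J, ∑ c : Fin l, ((B - K * W j) i c) ^ 2)
      ≤ ∑ i ∈ Idx j, ∑ c : Fin l, ((B - K * W j) i c) ^ 2)
    (hWupd : ∀ j, W (j + 1) = W j +
      (rowSel (Idx j))ᵀ * (rowSel (Idx j) * K * (rowSel (Idx j))ᵀ)⁻¹ *
        (rowSel (Idx j) * (B - K * W j))) :
    ∀ t : ℕ,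
      ((W (t * m) - Wstar)ᵀ * K * (W (t * m) - Wstar)).trace
        ≤ Real.exp (-(t : ℝ) / (lam'max / lammin)) *
          ((W 0 - Wstar)ᵀ * K * (W 0 - Wstar)).trace :=
  altproj_gs_epoch_convergence_general K hK B P m hm hcover hdisj lammin hmin hsub lam'max hlam
    Wstar hWstar W Idx hIdx hGS hWupd
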